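/- Let J ⊆ ℝ be an interval, let δ > 0, and let a, b : J → ℝ be C¹ functions satisfying δ ≤ a′(t) ≤ b′(t) for all t ∈ J. Define m(t) := min{a(t), b(t)} and m̃(t) := 1 + (a(t)+b(t))/2 − √(1 + ((b(t)−a(t))/2)²). Then m̃ is of class C¹ on J and for all t ∈ J: m(t) ≤ m̃(t) ≤ m(t) + 1, and m̃′(t) ≥ δ. -/

import Mathlib

/-!
`m̃ = smoothMin a b` with `smoothMin x y = 1 + (x + y)/2 - √(1 + u²)`, `u = (y - x)/2`.
Since `min x y = (x + y)/2 - |u|` and `|u| < √(1 + u²) ≤ 1 + |u|`, we get `min ≤ m̃ ≤ min + 1`.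
The chain rule gives `m̃′ = w a′ + (1 - w) b′` with `w = (1 + u/√(1 + u²))/2 ∈ [0, 1]`, so `m̃′`
is a convex combination of `a′` and `b′`, hence at least `min a′ b′ ≥ δ`.
-/

open Real

noncomputable section

def smoothMin (x y : ℝ) : ℝ := 1 + (x + y) / 2 - √(1 + ((y - x) / 2) ^ 2)

def smoothMinWeight (x y : ℝ) : ℝ := (1 + (y - x) / 2 / √(1 + ((y - x) / 2) ^ 2)) / 2

end

lemma abs_lt_sqrt_one_add_sq (u : ℝ) : |u| < √(1 + u ^ 2) := by
  rw [← sqrt_sq_eq_abs]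
  exact sqrt_lt_sqrt (sq_nonneg u) (lt_one_add _)

lemma sqrt_one_add_sq_le_one_add_abs (u : ℝ) : √(1 + u ^ 2) ≤ 1 + |u| := by
  rw [sqrt_le_left (by positivity), add_sq, one_pow, mul_one, sq_abs]
  nlinarith [abs_nonneg u]

lemma min_le_weighted_average {w : ℝ} (hw₀ : 0 ≤ w) (hw₁ : w ≤ 1) (x y : ℝ) :
    min x y ≤ w * x + (1 - w) * y := by
  nlinarith [min_le_left x y, min_le_right x y]

lemma smoothMin_eq_min_add (x y : ℝ) :
    smoothMin x y = min x y + (1 + |(y - x) / 2| - √(1 + ((y - x) / 2) ^ 2)) := by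
  have h : 2 * min x y = x + y - |y - x| := by
    linarith [min_add_max x y, max_sub_min_eq_abs x y]
  rw [smoothMin, abs_div, abs_two]
  linarith

lemma min_le_smoothMin (x y : ℝ) : min x y ≤ smoothMin x y := by
  rw [smoothMin_eq_min_add]
  linarith [sqrt_one_add_sq_le_one_add_abs ((y - x) / 2)]

lemma smoothMin_le_min_add_one (x y : ℝ) : smoothMin x y ≤ min x y + 1 := by
  rw [smoothMin_eq_min_add]
  linarith [abs_lt_sqrt_one_add_sq ((y - x) / 2)]

lemma smoothMinWeight_mem_Icc (x y : ℝ) : smoothMinWeight x y ∈ Set.Icc 0 1 := by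
  set u := (y - x) / 2
  have hs : 0 < √(1 + u ^ 2) := sqrt_pos.2 (by positivity)
  have hq : |u / √(1 + u ^ 2)| ≤ 1 := by
    rw [abs_div, abs_of_pos hs, div_le_one hs]
    exact (abs_lt_sqrt_one_add_sq u).le
  rw [abs_le] at hq
  constructor <;> simp only [smoothMinWeight] <;> linarith [hq.1, hq.2]

section

variable {E : Type*} [NormedAddCommGroup E] [NormedSpace ℝ E] {n : WithTop ℕ∞}

theorem ContDiff.smoothMin {f g : E → ℝ} (hf : ContDiff ℝ n f) (hg : ContDiff ℝ n g) :
    ContDiff ℝ n fun t => smoothMin (f t) (g t) :=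
  (contDiff_const.add ((hf.add hg).div_const 2)).sub
    ((contDiff_const.add (((hg.sub hf).div_const 2).pow 2)).sqrt fun _ => by positivity)

end

theorem HasDerivAt.smoothMin {f g : ℝ → ℝ} {f' g' t : ℝ} (hf : HasDerivAt f f' t)
    (hg : HasDerivAt g g' t) :
    HasDerivAt (fun s => smoothMin (f s) (g s))
      (smoothMinWeight (f t) (g t) * f' + (1 - smoothMinWeight (f t) (g t)) * g') t := by
  have hpos : 0 < 1 + ((g t - f t) / 2) ^ 2 := by positivity
  have hs : √(1 + ((g t - f t) / 2) ^ 2) ≠ 0 := (sqrt_pos.2 hpos).ne'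
  have hu : HasDerivAt (fun s => (g s - f s) / 2) ((g' - f') / 2) t := (hg.sub hf).div_const 2
  have hsqrt : HasDerivAt (fun s => √(1 + ((g s - f s) / 2) ^ 2))
      ((g t - f t) / 2 * ((g' - f') / 2) / √(1 + ((g t - f t) / 2) ^ 2)) t := by
    convert ((hu.fun_pow 2).const_add 1).sqrt hpos.ne' using 1
    field_simp
    ring
  refine ((((hf.add hg).div_const 2).const_add 1).sub hsqrt).congr_deriv ?_
  rw [smoothMinWeight]
  field_simp
  ring

theorem smooth_min_regularization
    (J : Set ℝ) (δ : ℝ)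
    (a b : ℝ → ℝ) (ha : ContDiff ℝ 1 a) (hb : ContDiff ℝ 1 b)
    (hder : ∀ t ∈ J, δ ≤ deriv a t ∧ deriv a t ≤ deriv b t) :
    ContDiff ℝ 1
        (fun t => 1 + (a t + b t) / 2 - Real.sqrt (1 + ((b t - a t) / 2) ^ 2)) ∧
      ∀ t ∈ J,
        min (a t) (b t) ≤
            1 + (a t + b t) / 2 - Real.sqrt (1 + ((b t - a t) / 2) ^ 2) ∧
          1 + (a t + b t) / 2 - Real.sqrt (1 + ((b t - a t) / 2) ^ 2) ≤
            min (a t) (b t) + 1 ∧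
          δ ≤ deriv
              (fun s => 1 + (a s + b s) / 2 - Real.sqrt (1 + ((b s - a s) / 2) ^ 2)) t := by
  refine ⟨ha.smoothMin hb, fun t ht => ⟨min_le_smoothMin _ _, smoothMin_le_min_add_one _ _, ?_⟩⟩
  obtain ⟨hδa, hab⟩ := hder t ht
  obtain ⟨hw₀, hw₁⟩ := smoothMinWeight_mem_Icc (a t) (b t)
  have hderiv := ((ha.differentiable one_ne_zero t).hasDerivAt).smoothMin
    (hb.differentiable one_ne_zero t).hasDerivAt
  calc δ ≤ min (deriv a t) (deriv b t) := le_min hδa (hδa.trans hab)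
    _ ≤ _ := min_le_weighted_average hw₀ hw₁ _ _
    _ = _ := hderiv.deriv.symm
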